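/- arXiv:2605.16954 — 3 statements merged into one kernel-verified Lean document; each statement's English description precedes it below -/
import Mathlib

section
/- Let A be normal with eigendecomposition A = Σ_j λ_j u_j u_j*, let q be a scalar polynomial with q(λ_j) ≠ 0 for all j, and let R(z) = q(z)^{-1} P(z) with P an s×s matrix polynomial. Define R(A)∘B := q(A)^{-1}(P(A)∘B). Then R(A)∘B = Σ_{j=1}^n u_j u_j* B R(λ_j), and consequently (R(A)∘B)*(S(A)∘B) = Σ_{j=1}^n R(λ_j)* (u_j*B)* (u_j*B) S(λ_j) for any two such rational functions R, S. -/
open Matrix BigOperators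

/-- Let `A` be normal with eigendecomposition `A = ∑ j, λ_j u_j u_j*`,
let `q` be a scalar polynomial with `q(λ_j) ≠ 0` for all `j` (so `q(A)` is invertible),
and let `R(z) = q(z)⁻¹ P(z)`, `S(z) = q(z)⁻¹ Q(z)` with `P, Q` matrix polynomials.
With `R(A)∘B := q(A)⁻¹ (P(A)∘B)`, we have `R(A)∘B = ∑ j, u_j u_j* B R(λ_j)` and
`(R(A)∘B)*(S(A)∘B) = ∑ j, R(λ_j)* (u_j*B)*(u_j*B) S(λ_j)`. -/
theorem rational_spectral_identity
    {n s : ℕ} (A : Matrix (Fin n) (Fin n) ℂ)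
    (hnormal : A * Aᴴ = Aᴴ * A)
    (u : Fin n → Fin n → ℂ) (lam : Fin n → ℂ)
    (horth : ∀ i j, star (u i) ⬝ᵥ u j = if i = j then 1 else 0)
    (hA : A = ∑ j, lam j • Matrix.vecMulVec (u j) (star (u j)))
    (B : Matrix (Fin n) (Fin s) ℂ)
    (q : Polynomial ℂ) (hq : ∀ j, q.eval (lam j) ≠ 0)
    (hqA : IsUnit (Polynomial.aeval A q))
    (d e : ℕ)
    (C : Fin (d + 1) → Matrix (Fin s) (Fin s) ℂ)
    (D : Fin (e + 1) → Matrix (Fin s) (Fin s) ℂ)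
    (RA SA : Matrix (Fin n) (Fin s) ℂ)
    (hRA : RA = (Polynomial.aeval A q)⁻¹ * ∑ k : Fin (d + 1), A ^ (k : ℕ) * B * C k)
    (hSA : SA = (Polynomial.aeval A q)⁻¹ * ∑ k : Fin (e + 1), A ^ (k : ℕ) * B * D k)
    (R S : ℂ → Matrix (Fin s) (Fin s) ℂ)
    (hR : ∀ z, R z = (q.eval z)⁻¹ • ∑ k : Fin (d + 1), z ^ (k : ℕ) • C k)
    (hS : ∀ z, S z = (q.eval z)⁻¹ • ∑ k : Fin (e + 1), z ^ (k : ℕ) • D k) :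
    RA = (∑ j, Matrix.vecMulVec (u j) (star (u j)) * B * R (lam j)) ∧
    RAᴴ * SA = ∑ j, (R (lam j))ᴴ *
        (Bᴴ * Matrix.vecMulVec (u j) (star (u j)) * B) * S (lam j) := by
  classical
  set E : Fin n → Matrix (Fin n) (Fin n) ℂ :=
    fun j => Matrix.vecMulVec (u j) (star (u j)) with hEdef
  -- orthogonality of the projectors
  have hEE : ∀ i j, E i * E j = if i = j then E i else 0 := by
    intro i j
    have hdot : (∑ k, star (u i k) * u j k) = if i = j then 1 else 0 := by
      simpa [dotProduct] using horth i j
    by_cases hij : i = j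
    · subst hij
      rw [if_pos rfl]
      ext a b
      simp only [hEdef, Matrix.mul_apply, Matrix.vecMulVec_apply, Pi.star_apply]
      calc ∑ k, u i a * star (u i k) * (u i k * star (u i b))
          = (u i a * star (u i b)) * ∑ k, star (u i k) * u i k := by
            rw [Finset.mul_sum]; exact Finset.sum_congr rfl fun k _ => by ring
        _ = u i a * star (u i b) := by
            rw [show (∑ k, star (u i k) * u i k) = 1 by simpa using hdot, mul_one]
    · rw [if_neg hij]
      ext a b
      simp only [hEdef, Matrix.mul_apply, Matrix.vecMulVec_apply, Pi.star_apply,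
        Matrix.zero_apply]
      calc ∑ k, u i a * star (u i k) * (u j k * star (u j b))
          = (u i a * star (u j b)) * ∑ k, star (u i k) * u j k := by
            rw [Finset.mul_sum]; exact Finset.sum_congr rfl fun k _ => by ring
        _ = 0 := by rw [show (∑ k, star (u i k) * u j k) = 0 by simpa [hij] using hdot,
            mul_zero]
  -- completeness : ∑ j, E j = 1
  have hsum : (∑ j, E j) = 1 := by
    set U : Matrix (Fin n) (Fin n) ℂ := Matrix.of fun a j => u j a with hUdef
    have hU : Uᴴ * U = 1 := by
      ext i j
      simpa [hUdef, Matrix.mul_apply, Matrix.conjTranspose_apply, Matrix.one_apply,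
        dotProduct] using horth i j
    have hU2 : U * Uᴴ = 1 := mul_eq_one_comm.mp hU
    ext a b
    have h := congr_fun (congr_fun (congrArg (fun (M : Matrix (Fin n) (Fin n) ℂ) a b => M a b)
      hU2) a) b
    simp only [hUdef, Matrix.mul_apply, Matrix.conjTranspose_apply, Matrix.of_apply] at h
    simpa [hEdef, Matrix.sum_apply, Matrix.vecMulVec_apply] using h
  -- product of spectral sums
  have hmul : ∀ (f g : Fin n → ℂ),
      (∑ i, f i • E i) * (∑ j, g j • E j) = ∑ j, (f j * g j) • E j := by
    intro f g
    calc (∑ i, f i • E i) * (∑ j, g j • E j)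
        = ∑ i, ∑ j, (f i * g j) • (E i * E j) := by
          rw [Finset.sum_mul]
          refine Finset.sum_congr rfl fun i _ => ?_
          rw [Finset.mul_sum]
          refine Finset.sum_congr rfl fun j _ => ?_
          rw [smul_mul_assoc, mul_smul_comm, smul_smul]
      _ = ∑ j, (f j * g j) • E j := by
          simp only [hEE, smul_ite, smul_zero]
          rw [Finset.sum_comm]
          simp
  -- powers of A
  have hAk : ∀ k : ℕ, A ^ k = ∑ j, (lam j ^ k) • E j := by
    intro k
    induction k with
    | zero => simp [hsum]
    | succ k ih =>
        rw [pow_succ, ih, hA, hmul]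
        exact Finset.sum_congr rfl fun j _ => by rw [pow_succ]
  -- spectral form of p(A) for any polynomial p
  have haeval : ∀ p : Polynomial ℂ,
      Polynomial.aeval A p = ∑ j, (p.eval (lam j)) • E j := by
    intro p
    induction p using Polynomial.induction_on' with
    | add p r hp hr =>
        rw [map_add, hp, hr, ← Finset.sum_add_distrib]
        exact Finset.sum_congr rfl fun j _ => by rw [Polynomial.eval_add, add_smul]
    | monomial m c =>
        rw [Polynomial.aeval_monomial, hAk m]
        simp only [Polynomial.eval_monomial]
        have halg : (algebraMap ℂ (Matrix (Fin n) (Fin n) ℂ)) c * ∑ j, lam j ^ m • E j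
            = c • ∑ j, lam j ^ m • E j := by
          rw [Algebra.algebraMap_eq_smul_one, smul_mul_assoc, one_mul]
        rw [halg, Finset.smul_sum]
        exact Finset.sum_congr rfl fun j _ => by rw [smul_smul]
  -- inverse of q(A)
  have hinv : (Polynomial.aeval A q)⁻¹ = ∑ j, (q.eval (lam j))⁻¹ • E j := by
    apply Matrix.inv_eq_right_inv
    rw [haeval q, hmul]
    calc (∑ j, (q.eval (lam j) * (q.eval (lam j))⁻¹) • E j) = ∑ j, E j := by
          refine Finset.sum_congr rfl fun j _ => ?_
          rw [mul_inv_cancel₀ (hq j), one_smul]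
      _ = 1 := hsum
  -- key computation for a single monomial term
  have key : ∀ (m : ℕ) (M : Matrix (Fin s) (Fin s) ℂ),
      (∑ j, (q.eval (lam j))⁻¹ • E j) * (A ^ m * B * M)
      = ∑ j, ((q.eval (lam j))⁻¹ * lam j ^ m) • (E j * B * M) := by
    intro m M
    rw [show (∑ j, (q.eval (lam j))⁻¹ • E j) * (A ^ m * B * M)
        = ((∑ j, (q.eval (lam j))⁻¹ • E j) * A ^ m) * B * M by
          simp only [Matrix.mul_assoc]]
    rw [hAk m, hmul, Matrix.sum_mul, Matrix.sum_mul]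
    exact Finset.sum_congr rfl fun j _ => by rw [Matrix.smul_mul, Matrix.smul_mul]
  -- first identity
  have hRA' : RA = ∑ j, E j * B * R (lam j) := by
    rw [hRA, hinv, Matrix.mul_sum]
    simp only [key]
    rw [Finset.sum_comm]
    refine Finset.sum_congr rfl fun j _ => ?_
    rw [hR (lam j), Matrix.mul_smul, Matrix.mul_sum, Finset.smul_sum]
    refine Finset.sum_congr rfl fun k _ => ?_
    rw [Matrix.mul_smul, smul_smul, Matrix.mul_assoc]
  have hSA' : SA = ∑ j, E j * B * S (lam j) := by
    rw [hSA, hinv, Matrix.mul_sum]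
    simp only [key]
    rw [Finset.sum_comm]
    refine Finset.sum_congr rfl fun j _ => ?_
    rw [hS (lam j), Matrix.mul_smul, Matrix.mul_sum, Finset.smul_sum]
    refine Finset.sum_congr rfl fun k _ => ?_
    rw [Matrix.mul_smul, smul_smul, Matrix.mul_assoc]
  -- Hermitian projectors
  have hEH : ∀ j, (E j)ᴴ = E j := by
    intro j
    ext a b
    simp [hEdef, Matrix.conjTranspose_apply, Matrix.vecMulVec_apply, mul_comm]
  -- cross terms
  have cross : ∀ i j, (E i * B * R (lam i))ᴴ * (E j * B * S (lam j))
      = if i = j then (R (lam j))ᴴ * (Bᴴ * E j * B) * S (lam j) else 0 := by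
    intro i j
    rw [Matrix.conjTranspose_mul, Matrix.conjTranspose_mul, hEH]
    have h1 : (R (lam i))ᴴ * (Bᴴ * E i) * (E j * B * S (lam j))
        = (R (lam i))ᴴ * Bᴴ * (E i * E j) * (B * S (lam j)) := by
      simp only [Matrix.mul_assoc]
    rw [h1, hEE]
    by_cases hij : i = j
    · subst hij
      rw [if_pos rfl, if_pos rfl]
      simp only [Matrix.mul_assoc]
    · rw [if_neg hij, if_neg hij]
      simp
  refine ⟨hRA', ?_⟩
  rw [hRA', hSA', Matrix.conjTranspose_sum, Matrix.sum_mul]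
  calc (∑ i, (E i * B * R (lam i))ᴴ * ∑ j, E j * B * S (lam j))
      = ∑ i, ∑ j, if i = j then (R (lam j))ᴴ * (Bᴴ * E j * B) * S (lam j) else 0 := by
        refine Finset.sum_congr rfl fun i _ => ?_
        rw [Matrix.mul_sum]
        exact Finset.sum_congr rfl fun j _ => cross i j
    _ = ∑ j, (R (lam j))ᴴ * (Bᴴ * E j * B) * S (lam j) := by
        rw [Finset.sum_comm]
        simp
end

section
/- Suppose A is unitary and block vectors V_k, Ṽ_k ∈ ℂ^{n×s} satisfy the coupled recurrences A V_k = V_{k+1} ρ^R_k + Ṽ_k α_k* and Ṽ_k = Ṽ_{k+1} ρ^L_k + A V_k α_k, with ρ^R_k α_k = α_k ρ^L_k. Then Ṽ_{k+1} = Ṽ_k ρ^L_k − V_{k+1} α_k. -/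
open Matrix BigOperators
open scoped ComplexOrder Matrix.Norms.L2Operator

/-!
Eliminating `Ṽ_k α_k*` between the two recurrences and using `ρ^R_k α_k = α_k ρ^L_k` gives
`Ṽ_k (ρ^L_k)² = (Ṽ_{k+1} + V_{k+1} α_k) ρ^L_k`. Since `‖α_k‖ < 1`, the matrix
`(ρ^L_k)² = I - α_k* α_k` is invertible, hence so is `ρ^L_k`, and one factor `ρ^L_k` cancels.
-/

theorem Matrix.isUnit_one_sub_conjTranspose_mul_self {m 𝕜 : Type*} [Fintype m] [DecidableEq m]
    [RCLike 𝕜] {α : Matrix m m 𝕜} (hα : ‖α‖ < 1) : IsUnit (1 - αᴴ * α) :=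
  (Units.oneSub _ <| by
    rw [l2_opNorm_conjTranspose_mul_self]; nlinarith [norm_nonneg α]).isUnit

theorem Matrix.mul_eq_of_mul_mul_eq_mul {m n R : Type*} [Fintype n] [DecidableEq n]
    [CommRing R] {ρ : Matrix n n R} (hρ : IsUnit (ρ * ρ)) {X Y : Matrix m n R}
    (h : X * ρ * ρ = Y * ρ) : X * ρ = Y :=
  have := (isUnit_of_mul_isUnit_left hρ).invertible
  mul_left_injective_of_invertible ρ h

theorem tilde_mul_rhoL_mul_rhoL {m n k R : Type*} [Fintype n] [Fintype k] [DecidableEq k]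
    [Ring R] [Star R]
    {A : Matrix m n R} {V : Matrix n k R} {W V' W' : Matrix m k R} {α ρR ρL : Matrix k k R}
    (hρL : ρL * ρL = 1 - αᴴ * α) (hint : ρR * α = α * ρL)
    (h1 : A * V = V' * ρR + W * αᴴ) (h2 : W = W' * ρL + A * V * α) :
    W * ρL * ρL = (W' + V' * α) * ρL := by
  have hWα : W * αᴴ = A * V - V' * ρR := by rw [h1]; abel
  calc W * ρL * ρL = W - W * αᴴ * α := by
        rw [Matrix.mul_assoc, hρL, Matrix.mul_sub, Matrix.mul_one, Matrix.mul_assoc]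
    _ = W - A * V * α + V' * (ρR * α) := by
        rw [hWα, Matrix.sub_mul, Matrix.mul_assoc V' ρR α]; abel
    _ = (W' + V' * α) * ρL := by
        rw [hint, h2, Matrix.add_mul, Matrix.mul_assoc V' α ρL]; abel

theorem tilde_v_recursion_general
    {n s : ℕ} (A : Matrix (Fin n) (Fin n) ℂ)
    (V W V' W' : Matrix (Fin n) (Fin s) ℂ)  -- V = V_k, V' = V_{k+1}, W = Ṽ_k, W' = Ṽ_{k+1}
    (α ρR ρL : Matrix (Fin s) (Fin s) ℂ) (hα : ‖α‖ < 1)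
    (hρL : ρL.PosSemidef ∧ ρL * ρL = 1 - αᴴ * α)
    (hint : ρR * α = α * ρL)
    (h1 : A * V = V' * ρR + W * αᴴ)
    (h2 : W = W' * ρL + (A * V) * α) :
    W' = W * ρL - V' * α := by
  have hρL_sq : IsUnit (ρL * ρL) := hρL.2 ▸ isUnit_one_sub_conjTranspose_mul_self hα
  rw [mul_eq_of_mul_mul_eq_mul hρL_sq (tilde_mul_rhoL_mul_rhoL hρL.2 hint h1 h2)]
  abel

/-- Suppose `A` is unitary and the block vectors `V_k, Ṽ_k` satisfy the
coupled Szegő recurrences `A V_k = V_{k+1} ρ^R_k + Ṽ_k α_k*` and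
`Ṽ_k = Ṽ_{k+1} ρ^L_k + A V_k α_k`, where `‖α_k‖₂ < 1`,
`ρ^R_k = (I-α_kα_k*)^{1/2}`, `ρ^L_k = (I-α_k*α_k)^{1/2}` and `ρ^R_k α_k = α_k ρ^L_k`.
Then `Ṽ_{k+1} = Ṽ_k ρ^L_k - V_{k+1} α_k`. -/
theorem tilde_v_recursion
    {n s : ℕ} (A : Matrix (Fin n) (Fin n) ℂ)
    (hA : Aᴴ * A = 1) (hA' : A * Aᴴ = 1)
    (V W V' W' : Matrix (Fin n) (Fin s) ℂ)  -- V = V_k, V' = V_{k+1}, W = Ṽ_k, W' = Ṽ_{k+1}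
    (α ρR ρL : Matrix (Fin s) (Fin s) ℂ) (hα : ‖α‖ < 1)
    (hρR : ρR.PosSemidef ∧ ρR * ρR = 1 - α * αᴴ)
    (hρL : ρL.PosSemidef ∧ ρL * ρL = 1 - αᴴ * α)
    (hint : ρR * α = α * ρL)
    (h1 : A * V = V' * ρR + W * αᴴ)
    (h2 : W = W' * ρL + (A * V) * α) :
    W' = W * ρL - V' * α :=
  tilde_v_recursion_general A V W V' W' α ρR ρL hα hρL hint h1 h2
end

section
/- Under the hypotheses of the previous recurrence (Ṽ_1 = V_1, A V_k = V_{k+1} ρ^R_k + Ṽ_k α_k*, Ṽ_{k+1} = Ṽ_k ρ^L_k − V_{k+1} α_k), for each k, A V_k = V_1 ρ^L_1⋯ρ^L_{k−1} α_k* − Σ_{h=2}^{k} V_h α_{h−1} ρ^L_h⋯ρ^L_{k−1} α_k* + V_{k+1} ρ^R_k. Consequently, if moreover V_i* V_j = δ_{ij} I_s, then the projected blocks H_{h,k} = V_h* A V_k satisfy: H_{1,k} = ρ^L_1⋯ρ^L_{k−1} α_k*, H_{h,k} = −α_{h−1} ρ^L_h⋯ρ^L_{k−1} α_k* for 2 ≤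 h ≤ k, H_{k+1,k} = ρ^R_k, and H_{h,k} = 0 for h ≥ k+2. -/
open Matrix BigOperators

lemma Wform {n s m : ℕ}
    (V W : ℕ → Matrix (Fin n) (Fin s) ℂ)
    (α ρL : ℕ → Matrix (Fin s) (Fin s) ℂ)
    (hinit : W 1 = V 1)
    (h2 : ∀ k, 1 ≤ k → k ≤ m → W (k + 1) = W k * ρL k - V (k + 1) * α k) :
    ∀ k, 1 ≤ k → k ≤ m + 1 →
      W k = V 1 * ((List.range' 1 (k - 1)).map ρL).prod
        - ∑ h ∈ Finset.Icc 2 k, V h * α (h - 1) * ((List.range' h (k - h)).map ρL).prod := by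
  intro k
  induction k with
  | zero => omega
  | succ k ih =>
    intro _ hk1
    rcases Nat.eq_zero_or_pos k with h0 | hpos
    · subst h0
      simp [hinit, show Finset.Icc 2 1 = ∅ from rfl]
    · have hk : k ≤ m := by omega
      rw [h2 k hpos hk, ih hpos (by omega)]
      have hP : ((List.range' 1 (k + 1 - 1)).map ρL).prod
          = ((List.range' 1 (k - 1)).map ρL).prod * ρL k := by
        have e : k + 1 - 1 = (k - 1) + 1 := by omega
        rw [e, List.range'_concat, List.map_append, List.prod_append]
        simp only [List.map_cons, List.map_nil, List.prod_cons, List.prod_nil, mul_one]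
        rw [show 1 + 1 * (k - 1) = k from by omega]
      have hsum : (∑ h ∈ Finset.Icc 2 (k + 1),
            V h * α (h - 1) * ((List.range' h (k + 1 - h)).map ρL).prod)
          = (∑ h ∈ Finset.Icc 2 k, V h * α (h - 1) * ((List.range' h (k - h)).map ρL).prod) * ρL k
            + V (k + 1) * α k := by
        rw [Finset.sum_Icc_succ_top (by omega), Matrix.sum_mul]
        congr 1
        · apply Finset.sum_congr rfl
          intro h hh
          have hh2 := Finset.mem_Icc.mp hh
          have e : k + 1 - h = (k - h) + 1 := by omega
          rw [e, List.range'_concat, List.map_append, List.prod_append]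
          simp only [List.map_cons, List.map_nil, List.prod_cons, List.prod_nil, mul_one]
          rw [show h + 1 * (k - h) = k from by omega]
          simp only [Matrix.mul_assoc]
        · simp
      rw [hP, hsum, Matrix.sub_mul, Matrix.mul_assoc, sub_sub]

/-- Under the block Szegő recurrences (`Ṽ_1 = V_1`,
`A V_k = V_{k+1} ρ^R_k + Ṽ_k α_k*`, `Ṽ_{k+1} = Ṽ_k ρ^L_k - V_{k+1} α_k`), for each
`1 ≤ k ≤ m`,
`A V_k = V_1 ρ^L_1⋯ρ^L_{k-1} α_k* - ∑_{h=2}^{k} V_h α_{h-1} ρ^L_h⋯ρ^L_{k-1} α_k* + V_{k+1} ρ^R_k`.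
Consequently, if moreover `V_i* V_j = δ_{ij} I_s`, the projected blocks
`H_{h,k} = V_h* A V_k` are given by the Schur parametrization:
`H_{1,k} = ρ^L_1⋯ρ^L_{k-1} α_k*`, `H_{h,k} = -α_{h-1} ρ^L_h⋯ρ^L_{k-1} α_k*` for
`2 ≤ h ≤ k`, `H_{k+1,k} = ρ^R_k`, and `H_{h,k} = 0` for `h ≥ k+2`. -/
theorem schur_parametrization_of_hessenberg
    {n s m : ℕ} (A : Matrix (Fin n) (Fin n) ℂ)
    (V W : ℕ → Matrix (Fin n) (Fin s) ℂ)   -- W k = Ṽ_k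
    (α ρR ρL : ℕ → Matrix (Fin s) (Fin s) ℂ)
    (hinit : W 1 = V 1)
    (h1 : ∀ k, 1 ≤ k → k ≤ m → A * V k = V (k + 1) * ρR k + W k * (α k)ᴴ)
    (h2 : ∀ k, 1 ≤ k → k ≤ m → W (k + 1) = W k * ρL k - V (k + 1) * α k) :
    (∀ k, 1 ≤ k → k ≤ m →
      A * V k = V 1 * ((List.range' 1 (k - 1)).map ρL).prod * (α k)ᴴ
        - (∑ h ∈ Finset.Icc 2 k,
            V h * α (h - 1) * ((List.range' h (k - h)).map ρL).prod * (α k)ᴴ)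
        + V (k + 1) * ρR k) ∧
    ((∀ i j, 1 ≤ i → i ≤ m + 1 → 1 ≤ j → j ≤ m + 1 →
        (V i)ᴴ * V j = if i = j then (1 : Matrix (Fin s) (Fin s) ℂ) else 0) →
      ∀ k, 1 ≤ k → k ≤ m →
        ((V 1)ᴴ * (A * V k) = ((List.range' 1 (k - 1)).map ρL).prod * (α k)ᴴ) ∧
        (∀ h, 2 ≤ h → h ≤ k →
          (V h)ᴴ * (A * V k)
            = -(α (h - 1) * ((List.range' h (k - h)).map ρL).prod * (α k)ᴴ)) ∧
        ((V (k + 1))ᴴ * (A * V k) = ρR k) ∧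
        (∀ h, k + 2 ≤ h → h ≤ m + 1 → (V h)ᴴ * (A * V k) = 0)) := by
  have main : ∀ k, 1 ≤ k → k ≤ m →
      A * V k = V 1 * ((List.range' 1 (k - 1)).map ρL).prod * (α k)ᴴ
        - (∑ h ∈ Finset.Icc 2 k,
            V h * α (h - 1) * ((List.range' h (k - h)).map ρL).prod * (α k)ᴴ)
        + V (k + 1) * ρR k := by
    intro k hk1 hkm
    rw [h1 k hk1 hkm, Wform V W α ρL hinit h2 k hk1 (by omega),
      Matrix.sub_mul, Matrix.sum_mul, add_comm]
  refine ⟨main, fun hortho k hk1 hkm => ?_⟩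
  have hVV : ∀ i j, 1 ≤ i → i ≤ m + 1 → 1 ≤ j → j ≤ m + 1 → i ≠ j → (V i)ᴴ * V j = 0 := by
    intro i j hi1 hi2 hj1 hj2 hij
    rw [hortho i j hi1 hi2 hj1 hj2, if_neg hij]
  have expand : ∀ i, 1 ≤ i → i ≤ m + 1 →
      (V i)ᴴ * (A * V k)
        = ((V i)ᴴ * V 1) * (((List.range' 1 (k - 1)).map ρL).prod * (α k)ᴴ)
          - (∑ h ∈ Finset.Icc 2 k,
              ((V i)ᴴ * V h) * (α (h - 1) * (((List.range' h (k - h)).map ρL).prod * (α k)ᴴ)))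
          + ((V i)ᴴ * V (k + 1)) * ρR k := by
    intro i _ _
    rw [main k hk1 hkm]
    simp only [Matrix.mul_add, Matrix.mul_sub, Matrix.mul_sum, Matrix.mul_assoc]
  refine ⟨?_, ?_, ?_, ?_⟩
  · rw [expand 1 le_rfl (by omega),
      hortho 1 1 le_rfl (by omega) le_rfl (by omega), if_pos rfl,
      hVV 1 (k + 1) le_rfl (by omega) (by omega) (by omega) (by omega),
      Finset.sum_eq_zero]
    · simp [Matrix.mul_assoc]
    · intro h hh
      have hh2 := Finset.mem_Icc.mp hh
      rw [hVV 1 h le_rfl (by omega) (by omega) (by omega) (by omega), Matrix.zero_mul]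
  · intro h hh2 hhk
    rw [expand h (by omega) (by omega),
      hVV h 1 (by omega) (by omega) le_rfl (by omega) (by omega),
      hVV h (k + 1) (by omega) (by omega) (by omega) (by omega) (by omega),
      Finset.sum_eq_single_of_mem h (Finset.mem_Icc.mpr ⟨hh2, hhk⟩)]
    · rw [hortho h h (by omega) (by omega) (by omega) (by omega), if_pos rfl]
      simp [Matrix.mul_assoc]
    · intro b hb hbh
      have hb2 := Finset.mem_Icc.mp hb
      rw [hVV h b (by omega) (by omega) (by omega) (by omega) (Ne.symm hbh), Matrix.zero_mul]
  · rw [expand (k + 1) (by omega) (by omega),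
      hVV (k + 1) 1 (by omega) (by omega) le_rfl (by omega) (by omega),
      hortho (k + 1) (k + 1) (by omega) (by omega) (by omega) (by omega), if_pos rfl,
      Finset.sum_eq_zero]
    · simp
    · intro b hb
      have hb2 := Finset.mem_Icc.mp hb
      rw [hVV (k + 1) b (by omega) (by omega) (by omega) (by omega) (by omega), Matrix.zero_mul]
  · intro h hh hhm
    rw [expand h (by omega) hhm,
      hVV h 1 (by omega) hhm le_rfl (by omega) (by omega),
      hVV h (k + 1) (by omega) hhm (by omega) (by omega) (by omega),
      Finset.sum_eq_zero]
    · simp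
    · intro b hb
      have hb2 := Finset.mem_Icc.mp hb
      rw [hVV h b (by omega) hhm (by omega) (by omega) (by omega), Matrix.zero_mul]
end
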